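/- Let M' = ⟨(1,0), (1,1)⟩ and M = M' ∪ (ℤ × {n ∈ ℤ : n ≥ 2}) as an additive submonoid of ℤ². Then M is reduced, its set of atoms is exactly {(1,0), (1,1)}, the submonoid generated by the atoms equals {(x,y) ∈ ℤ² : 0 ≤ y ≤ x}, and M is almost atomic but not nearly atomic. -/

import Mathlib

/-- An element of ℤ² invertible within the submonoid M. -/
def IsUnitIn (M : AddSubmonoid (ℤ × ℤ)) (x : ℤ × ℤ) : Prop :=
  x ∈ M ∧ -x ∈ M

/-- An atom of the submonoid M of ℤ². -/
def IsAtomIn (M : AddSubmonoid (ℤ × ℤ)) (a : ℤ × ℤ) : Prop :=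
  a ∈ M ∧ ¬ IsUnitIn M a ∧
    ∀ r s : ℤ × ℤ, r ∈ M → s ∈ M → a = r + s → IsUnitIn M r ∨ IsUnitIn M s

/-- The submonoid generated by the atoms of M. -/
def AtomicElems (M : AddSubmonoid (ℤ × ℤ)) : AddSubmonoid (ℤ × ℤ) :=
  AddSubmonoid.closure {a : ℤ × ℤ | IsAtomIn M a}

/-!
The atoms (1,0), (1,1) generate the cone 0 ≤ y ≤ x, and every other nonzero element of M
splits off one of them. An element (x,y) with y ≥ 2 becomes atomic after adding (y - x, 0),
so M is almost atomic; but no single b works for all m, since b + (-b.1, 2) = (0, b.2 + 2)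
lies outside the cone.
-/

lemma mem_closure_one_zero_one_one_iff (p : ℤ × ℤ) :
    p ∈ AddSubmonoid.closure {((1 : ℤ), (0 : ℤ)), ((1 : ℤ), (1 : ℤ))} ↔
      0 ≤ p.2 ∧ p.2 ≤ p.1 := by
  constructor
  · intro hp
    induction hp using AddSubmonoid.closure_induction with
    | mem x hx => rcases hx with rfl | rfl <;> simp
    | zero => simp
    | add x y _ _ hx hy =>
        simp only [Prod.fst_add, Prod.snd_add]
        omega
  · rintro ⟨h0, hle⟩
    have key : p = (p.1 - p.2).toNat • ((1 : ℤ), (0 : ℤ)) + p.2.toNat • ((1 : ℤ), (1 : ℤ)) := by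
      ext <;> simp <;> omega
    rw [key]
    exact add_mem (nsmul_mem (AddSubmonoid.subset_closure (by simp)) _)
      (nsmul_mem (AddSubmonoid.subset_closure (by simp)) _)

section Reduced

variable (M : AddSubmonoid (ℤ × ℤ))

lemma isUnitIn_zero : IsUnitIn M 0 :=
  ⟨zero_mem M, by simp⟩

variable {M}

lemma isAtomIn_iff_of_reduced (hred : ∀ x, IsUnitIn M x → x = 0) (a : ℤ × ℤ) :
    IsAtomIn M a ↔ a ∈ M ∧ a ≠ 0 ∧ ∀ r s, r ∈ M → s ∈ M → a = r + s → r = 0 ∨ s = 0 := by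
  have unit_iff : ∀ x, IsUnitIn M x ↔ x = 0 :=
    fun x => ⟨hred x, by rintro rfl; exact isUnitIn_zero M⟩
  simp only [IsAtomIn, unit_iff]

end Reduced

section ConeWithUpperHalfPlane

variable {M : AddSubmonoid (ℤ × ℤ)} (hM : ∀ p : ℤ × ℤ, p ∈ M ↔ (0 ≤ p.2 ∧ p.2 ≤ p.1) ∨ 2 ≤ p.2)
include hM

lemma eq_zero_of_isUnitIn {x : ℤ × ℤ} (hx : IsUnitIn M x) : x = 0 := by
  obtain ⟨hpos, hneg⟩ := hx
  rw [hM] at hpos hneg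
  simp only [Prod.fst_neg, Prod.snd_neg] at hneg
  ext <;> simp <;> omega

lemma isAtomIn_iff (a : ℤ × ℤ) : IsAtomIn M a ↔ a = (1, 0) ∨ a = (1, 1) := by
  rw [isAtomIn_iff_of_reduced (fun _ => eq_zero_of_isUnitIn hM)]
  constructor
  · rintro ⟨ha, hne, hindec⟩
    by_contra hnot
    have split : ∀ e, e ∈ M → a - e ∈ M → e ≠ 0 → a - e ≠ 0 → False :=
      fun e he hrest he0 hrest0 => (hindec e _ he hrest (by abel)).elim he0 hrest0
    rw [hM] at ha
    simp only [ne_eq, Prod.ext_iff, Prod.fst_zero, Prod.snd_zero, not_or] at hne hnot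
    by_cases h1 : a.2 = 1
    · exact split (1, 1) ((hM _).2 (by norm_num)) ((hM _).2 (by simp; omega)) (by simp)
        (by simp [Prod.ext_iff]; omega)
    · exact split (1, 0) ((hM _).2 (by norm_num)) ((hM _).2 (by simp; omega)) (by simp)
        (by simp [Prod.ext_iff]; omega)
  · rintro (rfl | rfl) <;>
      refine ⟨(hM _).2 (by norm_num), by simp, fun r s hr hs hrs => ?_⟩ <;>
      rw [hM] at hr hs <;>
      simp only [Prod.ext_iff, Prod.fst_add, Prod.snd_add, Prod.fst_zero, Prod.snd_zero] at hrs ⊢ <;>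
      omega

lemma atomicElems_eq : AtomicElems M = AddSubmonoid.closure {(1, 0), (1, 1)} := by
  rw [AtomicElems]
  congr
  ext a
  exact isAtomIn_iff hM a

lemma mem_atomicElems_iff (p : ℤ × ℤ) : p ∈ AtomicElems M ↔ 0 ≤ p.2 ∧ p.2 ≤ p.1 := by
  rw [atomicElems_eq hM, mem_closure_one_zero_one_one_iff]

lemma exists_add_mem_atomicElems {b : ℤ × ℤ} (hb : b ∈ M) :
    ∃ c ∈ AtomicElems M, b + c ∈ AtomicElems M := by
  rw [hM] at hb
  refine ⟨(max 0 (b.2 - b.1), 0), ?_, ?_⟩ <;>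
    simp only [mem_atomicElems_iff hM, Prod.fst_add, Prod.snd_add] <;> omega

lemma not_forall_add_mem_atomicElems {b : ℤ × ℤ} (hb : b ∈ M) :
    ¬ ∀ m ∈ M, b + m ∈ AtomicElems M := by
  intro hall
  have hmem := hall (-b.1, 2) ((hM _).2 (by norm_num))
  rw [hM] at hb
  rw [mem_atomicElems_iff hM] at hmem
  simp only [Prod.fst_add, Prod.snd_add] at hmem
  omega

end ConeWithUpperHalfPlane

/-- Let M = ⟨(1,0),(1,1)⟩ ∪ (ℤ × ℤ_{≥2}).  Then M is reduced, its atoms are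
exactly (1,0) and (1,1), the submonoid generated by the atoms is
{(x,y) : 0 ≤ y ≤ x}, and M is almost atomic but not nearly atomic. -/
theorem M11_almost_atomic_not_nearly_atomic (M : AddSubmonoid (ℤ × ℤ))
    (hM : (M : Set (ℤ × ℤ)) =
      (AddSubmonoid.closure {((1 : ℤ), (0 : ℤ)), ((1 : ℤ), (1 : ℤ))} : Set (ℤ × ℤ))
        ∪ {p : ℤ × ℤ | 2 ≤ p.2}) :
    (∀ x ∈ M, IsUnitIn M x → x = 0) ∧
    ({a : ℤ × ℤ | IsAtomIn M a} = {((1 : ℤ), (0 : ℤ)), ((1 : ℤ), (1 : ℤ))}) ∧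
    ((AtomicElems M : Set (ℤ × ℤ)) = {p : ℤ × ℤ | 0 ≤ p.2 ∧ p.2 ≤ p.1}) ∧
    (∀ b ∈ M, ¬ IsUnitIn M b →
      ∃ c : ℤ × ℤ, c ∈ AtomicElems M ∧ b + c ∈ AtomicElems M) ∧
    ¬ (∃ b ∈ M, ∀ m ∈ M, b + m ∈ AtomicElems M) := by
  have memM : ∀ p : ℤ × ℤ, p ∈ M ↔ (0 ≤ p.2 ∧ p.2 ≤ p.1) ∨ 2 ≤ p.2 := fun p => by
    rw [← SetLike.mem_coe, hM, Set.mem_union, SetLike.mem_coe,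
      mem_closure_one_zero_one_one_iff, Set.mem_ofPred_eq]
  refine ⟨fun x _ => eq_zero_of_isUnitIn memM, ?_, ?_,
    fun b hb _ => exists_add_mem_atomicElems memM hb,
    fun ⟨_, hb, hall⟩ => not_forall_add_mem_atomicElems memM hb hall⟩
  · ext a
    simp [isAtomIn_iff memM a]
  · ext p
    exact mem_atomicElems_iff memM p
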